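/- Define x = w₀²/(4w₂²) and y = -2w₁⁴/(w₀w₂³) as rational functions of w₀,w₁,w₂, and dis₀(x,y) = (1-4x)⁴ - 256xy(1+4x+y). Then w₂⁸ · dis₀(x,y) = ((w₀+w₂)⁴ - (2w₁)⁴)·((w₀-w₂)⁴ + (2w₁)⁴) as an identity of rational functions (equivalently, of polynomials after clearing denominators, valid whenever w₀w₂ ≠ 0). -/

import Mathlib

/-!
Clearing denominators, `w₂⁸ · dis₀(x, y)` is the polynomial
`(w₀² - w₂²)⁴ + 8 w₀ w₂ (w₀² + w₂²) u - u²` with `u = (2w₁)⁴`. Since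
`(w₀ + w₂)⁴ (w₀ - w₂)⁴ = (w₀² - w₂²)⁴` and `(w₀ + w₂)⁴ - (w₀ - w₂)⁴ = 8 w₀ w₂ (w₀² + w₂²)`,
this is the quadratic `((w₀ + w₂)⁴ - u) ((w₀ - w₂)⁴ + u)` in `u`.
-/

/-- The principal discriminant `dis₀(x,y) = (1-4x)⁴ - 256xy(1+4x+y)`. -/
def dis₀ (x y : ℂ) : ℂ := (1 - 4 * x) ^ 4 - 256 * x * y * (1 + 4 * x + y)

theorem add_pow_four_sub_mul_sub_pow_four_add {R : Type*} [CommRing R] (a b u : R) :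
    ((a + b) ^ 4 - u) * ((a - b) ^ 4 + u) =
      (a ^ 2 - b ^ 2) ^ 4 + 8 * a * b * (a ^ 2 + b ^ 2) * u - u ^ 2 := by
  ring

theorem pow_eight_mul_dis₀_eq {w₀ w₂ : ℂ} (w₁ : ℂ) (hw₀ : w₀ ≠ 0) (hw₂ : w₂ ≠ 0) :
    w₂ ^ 8 * dis₀ (w₀ ^ 2 / (4 * w₂ ^ 2)) (-2 * w₁ ^ 4 / (w₀ * w₂ ^ 3)) =
      (w₀ ^ 2 - w₂ ^ 2) ^ 4 + 8 * w₀ * w₂ * (w₀ ^ 2 + w₂ ^ 2) * (2 * w₁) ^ 4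
        - ((2 * w₁) ^ 4) ^ 2 := by
  unfold dis₀
  field_simp
  ring

/-- With `x = w₀²/(4w₂²)` and `y = -2w₁⁴/(w₀w₂³)` (for `w₀w₂ ≠ 0`), one has
`w₂⁸ · dis₀(x,y) = ((w₀+w₂)⁴ - (2w₁)⁴)·((w₀-w₂)⁴ + (2w₁)⁴)`. -/
theorem dis0_in_w_coordinates (w₀ w₁ w₂ : ℂ) (hw₀ : w₀ ≠ 0) (hw₂ : w₂ ≠ 0) :
    w₂ ^ 8 * dis₀ (w₀ ^ 2 / (4 * w₂ ^ 2)) (-2 * w₁ ^ 4 / (w₀ * w₂ ^ 3)) =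
      ((w₀ + w₂) ^ 4 - (2 * w₁) ^ 4) * ((w₀ - w₂) ^ 4 + (2 * w₁) ^ 4) := by
  rw [pow_eight_mul_dis₀_eq w₁ hw₀ hw₂, add_pow_four_sub_mul_sub_pow_four_add]
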